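/- arXiv:2210.15273 — 4 statements merged into one kernel-verified Lean document; each statement's English description precedes it below -/
import Mathlib

section
/- If D = (E, F) is a set system and A is a feasible set of minimum cardinality, then D^{*|A} is normal (the empty set is feasible), and moreover D^{*×|A}, D^{×*|A}, and D^{*×*|A} are all normal. -/
open Finset Polynomial

variable {α : Type*} [DecidableEq α]

/-- The twist of a collection of feasible sets with respect to `A`. -/
noncomputable def SS.twist (A : Finset α) (F : Finset (Finset α)) : Finset (Finset α) :=
  F.image (fun X => symmDiff A X)

/-- Loop complementation at a single element `e`. -/
noncomputable def SS.lc (e : α) (F : Finset (Finset α)) : Finset (Finset α) :=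
  symmDiff F ((F.filter (fun X => e ∉ X)).image (insert e))

/-- The two generating operations: twist `*` and loop complementation `×`. -/
inductive SS.Op | star | cross

/-- Apply a single operation at a single element. -/
noncomputable def SS.opElem : SS.Op → α → Finset (Finset α) → Finset (Finset α)
  | .star, e, F => SS.twist {e} F
  | .cross, e, F => SS.lc e F

/-- Apply a word in `{*, ×}` at a single element. -/
noncomputable def SS.wordElem (w : List SS.Op) (e : α) (F : Finset (Finset α)) : Finset (Finset α) :=
  w.foldl (fun F o => SS.opElem o e F) F

/-- Apply a word in `{*, ×}` elementwise on a subset `A`. -/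
noncomputable def SS.wordOn (w : List SS.Op) (A : Finset α) (F : Finset (Finset α)) : Finset (Finset α) :=
  A.toList.foldl (fun F e => SS.wordElem w e F) F

/-- Size of a largest feasible set. -/
noncomputable def SS.rmax (F : Finset (Finset α)) : ℕ := F.sup Finset.card

/-- Size of a smallest feasible set. -/
noncomputable def SS.rmin (F : Finset (Finset α)) : ℕ := sInf (Finset.card '' (F : Set (Finset α)))

/-- The width of a set system. -/
noncomputable def SS.width (F : Finset (Finset α)) : ℕ := SS.rmax F - SS.rmin F

/-- The minimum-cardinality feasible sets. -/
noncomputable def SS.Fmin (F : Finset (Finset α)) : Finset (Finset α) :=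
  F.filter (fun X => X.card = SS.rmin F)

/-- The maximum-cardinality feasible sets. -/
noncomputable def SS.Fmax (F : Finset (Finset α)) : Finset (Finset α) :=
  F.filter (fun X => X.card = SS.rmax F)

/-- The partial-`w` polynomial of a set system with ground set `E`. -/
noncomputable def SS.poly (w : List SS.Op) (E : Finset α) (F : Finset (Finset α)) :
    Polynomial ℤ :=
  ∑ A ∈ E.powerset, (Polynomial.X : Polynomial ℤ) ^ SS.width (SS.wordOn w A F)

/-- A proper set system satisfying the symmetric exchange axiom. -/
noncomputable def SS.IsDeltaMatroid (F : Finset (Finset α)) : Prop :=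
  F.Nonempty ∧ ∀ X ∈ F, ∀ Y ∈ F, ∀ u ∈ symmDiff X Y,
    ∃ v ∈ symmDiff X Y, symmDiff X {u, v} ∈ F

/-- Apply a sequence of single-element twists and loop complementations. -/
noncomputable def SS.seqApply : List (SS.Op × α) → Finset (Finset α) → Finset (Finset α)
  | [], F => F
  | (o, e) :: s, F => SS.seqApply s (SS.opElem o e F)

/-- A set system is vf-safe if every sequence of single-element twists and loop
complementations yields a delta-matroid. -/
noncomputable def SS.VfSafe (F : Finset (Finset α)) : Prop :=
  ∀ s : List (SS.Op × α), SS.IsDeltaMatroid (SS.seqApply s F)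

/-- The direct sum of two set systems. -/
noncomputable def SS.dsum (F F' : Finset (Finset α)) : Finset (Finset α) :=
  (F ×ˢ F').image (fun p => p.1 ∪ p.2)

open SS

section Aux

/-!
Each single-element step of the words `*`, `*×`, `×*` and `*×*` at an element `e` of a
minimum feasible set `B` turns `B` into the minimum feasible set `B \ {e}`: a twist at `e`
lowers every cardinality by at most one and lowers that of `B` by exactly one, loop
complementation does not change the minimum feasible sets at all, and `*×*` at `e` only adds
sets `X \ {e}` for feasible `X ∋ e`. Running through the elements of a minimum feasible set `A`
therefore ends with `∅` feasible.
-/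

namespace SS

variable {F G : Finset (Finset α)} {B X Y : Finset α} {e : α}

omit [DecidableEq α] in
theorem mem_Fmin_iff : X ∈ Fmin F ↔ X ∈ F ∧ ∀ Y ∈ F, X.card ≤ Y.card := by
  refine ⟨fun h => ⟨(mem_filter.1 h).1, fun Y hY => ?_⟩, fun ⟨hX, hmin⟩ => ?_⟩
  · rw [(mem_filter.1 h).2]
    exact Nat.sInf_le ⟨Y, hY, rfl⟩
  · refine mem_filter.2 ⟨hX, le_antisymm ?_ (Nat.sInf_le ⟨X, hX, rfl⟩)⟩
    obtain ⟨Y, hY, hYc⟩ := Nat.sInf_mem (⟨X.card, X, hX, rfl⟩ :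
      (Finset.card '' (F : Set (Finset α))).Nonempty)
    rw [rmin, ← hYc]
    exact hmin Y hY

theorem mem_twist : Y ∈ twist X F ↔ symmDiff X Y ∈ F := by
  simp only [twist, mem_image]
  refine ⟨?_, fun h => ⟨_, h, symmDiff_symmDiff_cancel_left X Y⟩⟩
  rintro ⟨Z, hZ, rfl⟩
  rwa [symmDiff_symmDiff_cancel_left]

theorem symmDiff_singleton_of_mem (he : e ∈ X) : symmDiff {e} X = X.erase e := by
  ext a
  by_cases h : a = e <;> simp [mem_symmDiff, h, he]

theorem symmDiff_singleton_of_notMem (he : e ∉ X) : symmDiff {e} X = insert e X := by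
  ext a
  by_cases h : a = e <;> simp [mem_symmDiff, h, he]

theorem card_symmDiff_singleton_le : (symmDiff {e} X).card ≤ X.card + 1 := by
  by_cases he : e ∈ X
  · rw [symmDiff_singleton_of_mem he]
    exact card_erase_le.trans X.card.le_succ
  · rw [symmDiff_singleton_of_notMem he, card_insert_of_notMem he]

theorem erase_mem_twist_singleton (he : e ∈ B) : B.erase e ∈ twist {e} F ↔ B ∈ F := by
  rw [mem_twist, symmDiff_singleton_of_notMem (notMem_erase e B), insert_erase he]

theorem mem_lc : Y ∈ lc e F ↔ Xor (Y ∈ F) (e ∈ Y ∧ Y.erase e ∈ F) := by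
  have hinsert : Y ∈ (F.filter (e ∉ ·)).image (insert e) ↔ e ∈ Y ∧ Y.erase e ∈ F := by
    simp only [mem_image, mem_filter]
    constructor
    · rintro ⟨Z, ⟨hZ, heZ⟩, rfl⟩
      exact ⟨mem_insert_self e Z, by rwa [erase_insert heZ]⟩
    · rintro ⟨heY, hY⟩
      exact ⟨Y.erase e, ⟨hY, notMem_erase e Y⟩, insert_erase heY⟩
  rw [lc, mem_symmDiff, hinsert, xor_def]

theorem mem_lc_of_notMem (he : e ∉ Y) : Y ∈ lc e F ↔ Y ∈ F := by
  simp [mem_lc, he, xor_def]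

theorem lc_lc : lc e (lc e F) = F := by
  ext Y
  rw [mem_lc, mem_lc, mem_lc_of_notMem (notMem_erase e Y)]
  grind

theorem erase_notMem_of_mem_Fmin (hB : B ∈ Fmin F) (he : e ∈ B) : B.erase e ∉ F := fun h => by
  have := (mem_Fmin_iff.1 hB).2 _ h
  rw [card_erase_of_mem he] at this
  have := card_pos.2 ⟨e, he⟩
  omega

theorem Fmin_subset_Fmin_lc : Fmin F ⊆ Fmin (lc e F) := by
  intro B hB
  obtain ⟨hBF, hmin⟩ := mem_Fmin_iff.1 hB
  refine mem_Fmin_iff.2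
    ⟨mem_lc.2 (Or.inl ⟨hBF, fun ⟨he, herase⟩ => erase_notMem_of_mem_Fmin hB he herase⟩),
      fun Y hY => ?_⟩
  rcases mem_lc.1 hY with ⟨hYF, -⟩ | ⟨⟨-, herase⟩, -⟩
  · exact hmin Y hYF
  · exact (hmin _ herase).trans card_erase_le

theorem Fmin_lc : Fmin (lc e F) = Fmin F := by
  refine (Fmin_subset_Fmin_lc (e := e)).antisymm' ?_
  conv_rhs => rw [← lc_lc (e := e) (F := F)]
  exact Fmin_subset_Fmin_lc

theorem erase_mem_Fmin_of_card_le (hB : B ∈ Fmin F) (he : e ∈ B) (hmem : B.erase e ∈ G)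
    (hG : ∀ Y ∈ G, ∃ X ∈ F, X.card ≤ Y.card + 1) : B.erase e ∈ Fmin G := by
  refine mem_Fmin_iff.2 ⟨hmem, fun Y hY => ?_⟩
  obtain ⟨X, hX, hXY⟩ := hG Y hY
  have := (mem_Fmin_iff.1 hB).2 X hX
  rw [card_erase_of_mem he]
  omega

theorem erase_mem_Fmin_twist (hB : B ∈ Fmin F) (he : e ∈ B) :
    B.erase e ∈ Fmin (twist {e} F) :=
  erase_mem_Fmin_of_card_le hB he ((erase_mem_twist_singleton he).2 (mem_Fmin_iff.1 hB).1)
    fun _ hY => ⟨_, mem_twist.1 hY, card_symmDiff_singleton_le⟩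

theorem erase_mem_Fmin_twist_lc_twist (hB : B ∈ Fmin F) (he : e ∈ B) :
    B.erase e ∈ Fmin (twist {e} (lc e (twist {e} F))) := by
  have hB_notMem : B ∉ twist {e} F := by
    rw [mem_twist, symmDiff_singleton_of_mem he]
    exact erase_notMem_of_mem_Fmin hB he
  have hmem : B.erase e ∈ twist {e} (lc e (twist {e} F)) := by
    rw [erase_mem_twist_singleton he, mem_lc]
    exact Or.inr ⟨⟨he, (erase_mem_twist_singleton he).2 (mem_Fmin_iff.1 hB).1⟩, hB_notMem⟩
  refine erase_mem_Fmin_of_card_le hB he hmem fun Y hY => ?_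
  -- `*×*` at `e` only adds sets `X \ {e}` with `X ∈ F`, so `Y ∈ F` or `insert e Y ∈ F`.
  rw [mem_twist, mem_lc] at hY
  by_cases heY : e ∈ Y
  · rw [symmDiff_singleton_of_mem heY] at hY
    rcases hY with ⟨hY, -⟩ | ⟨⟨he', -⟩, -⟩
    · rw [mem_twist, symmDiff_singleton_of_notMem (notMem_erase e Y), insert_erase heY] at hY
      exact ⟨Y, hY, Y.card.le_succ⟩
    · exact absurd he' (notMem_erase e Y)
  · rw [symmDiff_singleton_of_notMem heY, erase_insert heY] at hY
    rcases hY with ⟨hY, -⟩ | ⟨⟨-, hY⟩, -⟩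
    · rw [mem_twist, symmDiff_singleton_of_mem (mem_insert_self e Y), erase_insert heY] at hY
      exact ⟨Y, hY, Y.card.le_succ⟩
    · rw [mem_twist, symmDiff_singleton_of_notMem heY] at hY
      exact ⟨_, hY, (card_insert_of_notMem heY).le⟩

def ErasesFromFmin (w : List Op) : Prop :=
  ∀ (F : Finset (Finset α)) (B : Finset α) (e : α),
    B ∈ Fmin F → e ∈ B → B.erase e ∈ Fmin (wordElem w e F)

theorem erasesFromFmin_star : ErasesFromFmin (α := α) [Op.star] :=
  fun _ _ _ => erase_mem_Fmin_twist

theorem erasesFromFmin_star_cross : ErasesFromFmin (α := α) [Op.star, Op.cross] :=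
  fun F _ e hB he => by
    change _ ∈ Fmin (lc e (twist {e} F))
    rw [Fmin_lc]
    exact erase_mem_Fmin_twist hB he

theorem erasesFromFmin_cross_star : ErasesFromFmin (α := α) [Op.cross, Op.star] :=
  fun _ _ e hB he => erase_mem_Fmin_twist ((Fmin_lc (e := e)).symm ▸ hB) he

theorem erasesFromFmin_star_cross_star :
    ErasesFromFmin (α := α) [Op.star, Op.cross, Op.star] :=
  fun _ _ _ => erase_mem_Fmin_twist_lc_twist

theorem empty_mem_foldl_wordElem {w : List Op} (hw : ErasesFromFmin (α := α) w) :
    ∀ l : List α, l.Nodup → ∀ F : Finset (Finset α), l.toFinset ∈ Fmin F →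
      ∅ ∈ l.foldl (fun F e => wordElem w e F) F
  | [], _, _, h => (mem_Fmin_iff.1 h).1
  | e :: l, hnd, F, h => by
    obtain ⟨hel, hnd⟩ := List.nodup_cons.1 hnd
    have hstep := hw F _ e h (List.mem_toFinset.2 List.mem_cons_self)
    rw [List.toFinset_cons, erase_insert (List.mem_toFinset.not.2 hel)] at hstep
    exact empty_mem_foldl_wordElem hw l hnd _ hstep

theorem empty_mem_wordOn {w : List Op} (hw : ErasesFromFmin (α := α) w) {A : Finset α}
    (hA : A ∈ Fmin F) : ∅ ∈ wordOn w A F :=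
  empty_mem_foldl_wordElem hw A.toList A.nodup_toList F (A.toList_toFinset.symm ▸ hA)

end SS

theorem stmt6 (F : Finset (Finset α)) (A : Finset α) (hA : A ∈ SS.Fmin F) :
    (∅ : Finset α) ∈ SS.wordOn [SS.Op.star] A F ∧
    (∅ : Finset α) ∈ SS.wordOn [SS.Op.star, SS.Op.cross] A F ∧
    (∅ : Finset α) ∈ SS.wordOn [SS.Op.cross, SS.Op.star] A F ∧
    (∅ : Finset α) ∈ SS.wordOn [SS.Op.star, SS.Op.cross, SS.Op.star] A F :=
  ⟨empty_mem_wordOn erasesFromFmin_star hA, empty_mem_wordOn erasesFromFmin_star_cross hA,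
    empty_mem_wordOn erasesFromFmin_cross_star hA,
    empty_mem_wordOn erasesFromFmin_star_cross_star hA⟩
end Aux
end

section
/- For any set system D = (E, F), any word • in {*, ×}, and any A ⊆ E, the partial-(*•*) polynomial of D equals the partial-• polynomial of D^* (where the outer * is applied to the full ground set E). In particular w(D^{*•*|A}) = w((D^*)^{•|A}) for all A ⊆ E. -/
open Finset Polynomial

variable {α : Type*} [DecidableEq α]

open SS

/-!
Twists compose by symmetric difference, and a twist by `S` commutes with both operations at
any `e ∉ S`. Hence `D^{*•*|A} = ((D^{*|A})^{•|A})^{*|A}`, and since `E ∆ A` is disjoint from `A`,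
`(D^*)^{•|A} = ((D^{*|A})^{•|A})^{*|E ∆ A}`. The two systems thus differ by the full twist by `E`,
which sends feasible sets of size `k` to sets of size `|E| - k` and therefore preserves width.
-/

namespace SS

lemma twist_twist (A B : Finset α) (F : Finset (Finset α)) :
    twist A (twist B F) = twist (symmDiff A B) F := by
  simp only [twist, image_image]
  congr 1
  funext X
  exact (symmDiff_assoc A B X).symm

@[simp]
lemma twist_empty (F : Finset (Finset α)) : twist ∅ F = F := by
  simp [twist, ← bot_eq_empty]

lemma twist_comm (A B : Finset α) (F : Finset (Finset α)) :
    twist A (twist B F) = twist B (twist A F) := by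
  rw [twist_twist, twist_twist, symmDiff_comm]

lemma lc_twist_of_notMem {e : α} {S : Finset α} (he : e ∉ S) (F : Finset (Finset α)) :
    lc e (twist S F) = twist S (lc e F) := by
  unfold lc twist
  rw [image_symmDiff _ _ (symmDiff_right_injective S), filter_image, image_image, image_image]
  have hfilter : F.filter (fun X => e ∉ symmDiff S X) = F.filter (fun X => e ∉ X) :=
    filter_congr fun X _ => by simp [mem_symmDiff, he]
  rw [hfilter]
  congr 1
  refine image_congr fun X hX => ?_
  have heX : e ∉ X := (mem_filter.1 hX).2
  ext a
  simp only [Function.comp_apply, mem_insert, mem_symmDiff]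
  by_cases ha : a = e <;> simp [ha, he, heX]

lemma opElem_twist_of_notMem {e : α} {S : Finset α} (he : e ∉ S) (o : Op)
    (F : Finset (Finset α)) : opElem o e (twist S F) = twist S (opElem o e F) := by
  cases o with
  | star => exact twist_comm _ _ _
  | cross => exact lc_twist_of_notMem he F

lemma wordElem_twist_of_notMem {e : α} {S : Finset α} (he : e ∉ S) (w : List Op)
    (F : Finset (Finset α)) : wordElem w e (twist S F) = twist S (wordElem w e F) := by
  induction w generalizing F with
  | nil => rfl
  | cons o w ih => exact (congrArg (wordElem w e) (opElem_twist_of_notMem he o F)).trans (ih _)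

lemma wordElem_star_append_star (w : List Op) (e : α) (F : Finset (Finset α)) :
    wordElem ([Op.star] ++ w ++ [Op.star]) e F = twist {e} (wordElem w e (twist {e} F)) := by
  simp only [wordElem, List.foldl_append]
  rfl

noncomputable def wordOnList (w : List Op) (l : List α) (F : Finset (Finset α)) :
    Finset (Finset α) :=
  l.foldl (fun F e => wordElem w e F) F

lemma wordOnList_twist_of_notMem (w : List Op) {l : List α} {S : Finset α}
    (hl : ∀ e ∈ l, e ∉ S) (F : Finset (Finset α)) :
    wordOnList w l (twist S F) = twist S (wordOnList w l F) := by
  induction l generalizing F with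
  | nil => rfl
  | cons e l ih =>
    simp only [wordOnList, List.foldl_cons] at ih ⊢
    rw [wordElem_twist_of_notMem (hl e List.mem_cons_self),
      ih (fun x hx => hl x (List.mem_cons_of_mem e hx))]

lemma wordOnList_star_append_star (w : List Op) {l : List α} (hl : l.Nodup)
    (F : Finset (Finset α)) :
    wordOnList ([Op.star] ++ w ++ [Op.star]) l F =
      twist l.toFinset (wordOnList w l (twist l.toFinset F)) := by
  induction l generalizing F with
  | nil => simp [wordOnList]
  | cons e l ih =>
    rw [List.toFinset_cons]
    obtain ⟨hel, hl⟩ := List.nodup_cons.1 hl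
    have heS : e ∉ l.toFinset := by simpa using hel
    have hinsert : insert e l.toFinset = symmDiff l.toFinset {e} := by
      ext a
      by_cases ha : a = e <;> simp [mem_symmDiff, ha, heS]
    have hlS : ∀ x ∈ l, x ∉ ({e} : Finset α) := fun x hx h => hel (mem_singleton.1 h ▸ hx)
    calc wordOnList ([Op.star] ++ w ++ [Op.star]) (e :: l) F
        = twist l.toFinset (wordOnList w l (twist l.toFinset
            (twist {e} (wordElem w e (twist {e} F))))) := by
          rw [← wordElem_star_append_star, ← ih hl]; rfl
      _ = twist l.toFinset (twist {e} (wordOnList w l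
            (wordElem w e (twist l.toFinset (twist {e} F))))) := by
          rw [twist_comm l.toFinset, wordOnList_twist_of_notMem w hlS,
            wordElem_twist_of_notMem heS]
      _ = twist (insert e l.toFinset) (wordOnList w (e :: l) (twist (insert e l.toFinset) F)) := by
          rw [hinsert, ← twist_twist, ← twist_twist]; rfl

lemma wordOn_star_append_star (w : List Op) (A : Finset α) (F : Finset (Finset α)) :
    wordOn ([Op.star] ++ w ++ [Op.star]) A F = twist A (wordOn w A (twist A F)) := by
  have h := wordOnList_star_append_star w A.nodup_toList F
  rwa [toList_toFinset] at h

lemma wordOn_twist_of_disjoint (w : List Op) {A S : Finset α} (h : Disjoint A S)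
    (F : Finset (Finset α)) : wordOn w A (twist S F) = twist S (wordOn w A F) :=
  wordOnList_twist_of_notMem w (fun _ he => disjoint_left.1 h (mem_toList.1 he)) F

lemma twist_subset_powerset {E S : Finset α} (hS : S ⊆ E) {F : Finset (Finset α)}
    (hF : F ⊆ E.powerset) : twist S F ⊆ E.powerset := by
  simp only [twist, image_subset_iff, mem_powerset]
  exact fun X hX => symmDiff_le_sup.trans (sup_le hS (mem_powerset.1 (hF hX)))

lemma lc_subset_powerset {E : Finset α} {e : α} (he : e ∈ E) {F : Finset (Finset α)}
    (hF : F ⊆ E.powerset) : lc e F ⊆ E.powerset := by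
  refine symmDiff_le_sup.trans (sup_le hF ?_)
  simp only [image_subset_iff, mem_filter, mem_powerset]
  exact fun X hX => insert_subset he (mem_powerset.1 (hF hX.1))

lemma opElem_subset_powerset {E : Finset α} {e : α} (he : e ∈ E) (o : Op)
    {F : Finset (Finset α)} (hF : F ⊆ E.powerset) : opElem o e F ⊆ E.powerset := by
  cases o with
  | star => exact twist_subset_powerset (singleton_subset_iff.2 he) hF
  | cross => exact lc_subset_powerset he hF

lemma wordElem_subset_powerset {E : Finset α} {e : α} (he : e ∈ E) (w : List Op)
    {F : Finset (Finset α)} (hF : F ⊆ E.powerset) : wordElem w e F ⊆ E.powerset := by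
  induction w generalizing F with
  | nil => exact hF
  | cons o w ih => exact ih (opElem_subset_powerset he o hF)

lemma wordOnList_subset_powerset {E : Finset α} (w : List Op) {l : List α} (hl : ∀ e ∈ l, e ∈ E)
    {F : Finset (Finset α)} (hF : F ⊆ E.powerset) : wordOnList w l F ⊆ E.powerset := by
  induction l generalizing F with
  | nil => exact hF
  | cons e l ih =>
    exact ih (fun x hx => hl x (List.mem_cons_of_mem e hx))
      (wordElem_subset_powerset (hl e List.mem_cons_self) w hF)

lemma wordOn_subset_powerset {E A : Finset α} (hA : A ⊆ E) (w : List Op)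
    {F : Finset (Finset α)} (hF : F ⊆ E.powerset) : wordOn w A F ⊆ E.powerset :=
  wordOnList_subset_powerset w (fun _ he => hA (mem_toList.1 he)) hF

lemma rmin_le {β : Type*} {F : Finset (Finset β)} {X : Finset β} (hX : X ∈ F) : rmin F ≤ #X :=
  Nat.sInf_le ⟨X, hX, rfl⟩

lemma exists_card_eq_rmin {β : Type*} {F : Finset (Finset β)} (hF : F.Nonempty) :
    ∃ X ∈ F, #X = rmin F :=
  Nat.sInf_mem (hF.to_set.image card)

lemma card_symmDiff_of_subset {E X : Finset α} (hX : X ⊆ E) : #(symmDiff E X) = #E - #X := by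
  rw [symmDiff_of_ge hX, card_sdiff_of_subset hX]

lemma rmax_twist_of_subset_powerset {E : Finset α} {F : Finset (Finset α)}
    (hF : F ⊆ E.powerset) (hne : F.Nonempty) : rmax (twist E F) = #E - rmin F := by
  obtain ⟨Xmin, hXmin, hcard⟩ := exists_card_eq_rmin hne
  refine le_antisymm (Finset.sup_le fun Y hY => ?_) ?_
  · obtain ⟨X, hX, rfl⟩ := mem_image.1 hY
    rw [card_symmDiff_of_subset (mem_powerset.1 (hF hX))]
    exact Nat.sub_le_sub_left (rmin_le hX) _
  · rw [← hcard, ← card_symmDiff_of_subset (mem_powerset.1 (hF hXmin))]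
    exact le_sup (mem_image_of_mem _ hXmin)

lemma rmin_twist_of_subset_powerset {E : Finset α} {F : Finset (Finset α)}
    (hF : F ⊆ E.powerset) (hne : F.Nonempty) : rmin (twist E F) = #E - rmax F := by
  obtain ⟨Xmax, hXmax, hcard⟩ := exists_mem_eq_sup F hne card
  obtain ⟨Y, hY, hYcard⟩ := exists_card_eq_rmin (F := twist E F) (hne.image _)
  obtain ⟨X, hX, rfl⟩ := mem_image.1 hY
  refine le_antisymm ?_ ?_
  · rw [rmax, hcard, ← card_symmDiff_of_subset (mem_powerset.1 (hF hXmax))]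
    exact rmin_le (mem_image_of_mem _ hXmax)
  · rw [← hYcard, card_symmDiff_of_subset (mem_powerset.1 (hF hX))]
    exact Nat.sub_le_sub_left (le_sup hX) _

lemma width_twist_of_subset_powerset {E : Finset α} {F : Finset (Finset α)}
    (hF : F ⊆ E.powerset) : width (twist E F) = width F := by
  rcases F.eq_empty_or_nonempty with rfl | hne
  · rfl
  obtain ⟨X, hX⟩ := hne
  have hmin : rmin F ≤ #X := rmin_le hX
  have hmax : #X ≤ rmax F := le_sup hX
  have hE : rmax F ≤ #E := Finset.sup_le fun Y hY => card_le_card (mem_powerset.1 (hF hY))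
  rw [width, width, rmax_twist_of_subset_powerset hF ⟨X, hX⟩,
    rmin_twist_of_subset_powerset hF ⟨X, hX⟩]
  omega

end SS

theorem stmt8 (E : Finset α) (F : Finset (Finset α)) (hF : ∀ X ∈ F, X ⊆ E)
    (w : List SS.Op) :
    SS.poly ([SS.Op.star] ++ w ++ [SS.Op.star]) E F = SS.poly w E (SS.twist E F) ∧
    ∀ A ⊆ E, SS.width (SS.wordOn ([SS.Op.star] ++ w ++ [SS.Op.star]) A F) =
      SS.width (SS.wordOn w A (SS.twist E F)) := by
  have hFE : F ⊆ E.powerset := fun X hX => mem_powerset.2 (hF X hX)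
  have width_eq : ∀ A ⊆ E, width (wordOn ([Op.star] ++ w ++ [Op.star]) A F) =
      width (wordOn w A (twist E F)) := by
    intro A hA
    set G := wordOn w A (twist A F)
    have hG : twist A G ⊆ E.powerset :=
      twist_subset_powerset hA (wordOn_subset_powerset hA w (twist_subset_powerset hA hFE))
    have hdisj : Disjoint A (symmDiff E A) := by
      rw [symmDiff_of_ge hA]
      exact disjoint_sdiff_self_right
    calc width (wordOn ([Op.star] ++ w ++ [Op.star]) A F) = width (twist A G) := by
          rw [wordOn_star_append_star]
      _ = width (twist E (twist A G)) := (width_twist_of_subset_powerset hG).symm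
      _ = width (wordOn w A (twist E F)) := by
          rw [twist_twist, ← wordOn_twist_of_disjoint w hdisj, twist_twist,
            symmDiff_symmDiff_cancel_right]
  refine ⟨sum_congr rfl fun A hA => ?_, width_eq⟩
  rw [width_eq A (mem_powerset.1 hA)]
end

section
/- Let D = (E, F) be a delta-matroid and e ∈ E with primal type t (no minimum feasible set contains e, but some feasible set of size r(D_min)+1 contains e). Then e has primal type u in D^{×|e}: no feasible set of D^{×|e} of size r(D_min) or r(D_min)+1 contains e, and r((D^{×|e})_min) = r(D_min). -/
open Finset Polynomial

variable {α : Type*} [DecidableEq α]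

open SS

/-! Loop complementation at `e` keeps the feasible sets avoiding `e`, and a set `B ∋ e` is
feasible in `D^{×|e}` exactly when one of `B`, `B \ {e}` is feasible in `D`. So the minimum
feasible sets survive, and it remains to see that `B ∈ F ↔ B \ {e} ∈ F` whenever `e ∈ B` and
`|B| ≤ r + 1`. Forwards, this is the sandwich lemma, since `e` lies in no minimum feasible set.
Backwards, it is the ribbon-loop property `A ∪ {e} ∈ F` for every minimum feasible `A`: starting
from `A₀ ∪ {e} ∈ F`, symmetric exchanges move `A₀` towards `A` while keeping `e`, because a
feasible subset of `(A₀ ∪ {e}) \ {u}` would be a minimum feasible set containing `e`. -/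

theorem Finset.card_insert_erase {β : Type*} [DecidableEq β] {S : Finset β} {u v : β}
    (hu : u ∈ S) (hv : v ∉ S) : (insert v (S.erase u)).card = S.card := by
  rw [card_insert_of_notMem fun h => hv (mem_of_mem_erase h), card_erase_add_one hu]

namespace SS

section SetSystem

variable {β : Type*} {F : Finset (Finset β)} {X : Finset β}

theorem mem_Fmin : X ∈ Fmin F ↔ X ∈ F ∧ X.card = rmin F := mem_filter

theorem rmin_le_card (hX : X ∈ F) : rmin F ≤ X.card :=
  Nat.sInf_le ⟨X, hX, rfl⟩

theorem Fmin_nonempty (hF : F.Nonempty) : (Fmin F).Nonempty := by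
  obtain ⟨A, hA, hAc⟩ := Nat.sInf_mem ((coe_nonempty.2 hF).image card)
  exact ⟨A, mem_Fmin.2 ⟨hA, hAc⟩⟩

theorem rmin_eq_of_mem_of_forall_card_le (hX : X ∈ F) (hle : ∀ Y ∈ F, X.card ≤ Y.card) :
    rmin F = X.card :=
  (rmin_le_card hX).antisymm (le_csInf ⟨_, X, hX, rfl⟩ (by rintro _ ⟨Y, hY, rfl⟩; exact hle Y hY))

end SetSystem

variable {F : Finset (Finset α)} {A B X Y : Finset α} {e u : α}

theorem mem_lc_iff : B ∈ lc e F ↔ Xor (B ∈ F) (e ∈ B ∧ B.erase e ∈ F) := by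
  have hG : B ∈ (F.filter (e ∉ ·)).image (insert e) ↔ e ∈ B ∧ B.erase e ∈ F := by
    simp only [mem_image, mem_filter]
    constructor
    · rintro ⟨X, ⟨hX, heX⟩, rfl⟩
      exact ⟨mem_insert_self e X, by rwa [erase_insert heX]⟩
    · rintro ⟨heB, hB⟩
      exact ⟨B.erase e, ⟨hB, notMem_erase e B⟩, insert_erase heB⟩
  rw [lc, mem_symmDiff, hG]
  rfl

theorem mem_lc_of_mem_Fmin (hA : A ∈ Fmin F) : A ∈ lc e F := by
  obtain ⟨hAF, hAc⟩ := mem_Fmin.1 hA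
  refine mem_lc_iff.2 (Or.inl ⟨hAF, fun ⟨heA, hAe⟩ => ?_⟩)
  have := rmin_le_card hAe
  rw [card_erase_of_mem heA] at this
  have := card_pos.2 ⟨e, heA⟩
  omega

theorem rmin_le_card_of_mem_lc (hB : B ∈ lc e F) : rmin F ≤ B.card := by
  rcases mem_lc_iff.1 hB with ⟨hBF, -⟩ | ⟨⟨-, hBe⟩, -⟩
  · exact rmin_le_card hBF
  · exact (rmin_le_card hBe).trans card_erase_le

theorem rmin_lc (hF : F.Nonempty) : rmin (lc e F) = rmin F := by
  obtain ⟨A, hA⟩ := Fmin_nonempty hF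
  rw [rmin_eq_of_mem_of_forall_card_le (mem_lc_of_mem_Fmin hA), (mem_Fmin.1 hA).2]
  exact fun B hB => (mem_Fmin.1 hA).2 ▸ rmin_le_card_of_mem_lc hB

namespace IsDeltaMatroid

theorem exists_subset_erase_or_exchange (hD : IsDeltaMatroid F) (hX : X ∈ F) (hY : Y ∈ F)
    (hu : u ∈ X) (huY : u ∉ Y) :
    (∃ C ∈ F, C ⊆ X.erase u) ∨ ∃ v ∈ Y, v ∉ X ∧ insert v (X.erase u) ∈ F := by
  obtain ⟨v, hv, hXv⟩ := hD.2 X hX Y hY u (mem_symmDiff.2 (Or.inl ⟨hu, huY⟩))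
  rcases mem_symmDiff.1 hv with ⟨hvX, -⟩ | ⟨hvY, hvX⟩
  · refine Or.inl ⟨_, hXv, fun x hx => ?_⟩
    rw [mem_symmDiff] at hx
    aesop
  · refine Or.inr ⟨v, hvY, hvX, ?_⟩
    convert hXv using 1
    ext x
    simp only [mem_insert, mem_erase, mem_symmDiff, mem_singleton]
    aesop

theorem exists_exchange_of_mem_Fmin (hD : IsDeltaMatroid F) (hA : A ∈ Fmin F) (hY : Y ∈ F)
    (hu : u ∈ A) (huY : u ∉ Y) : ∃ v ∈ Y, v ∉ A ∧ insert v (A.erase u) ∈ Fmin F := by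
  obtain ⟨hAF, hAc⟩ := mem_Fmin.1 hA
  rcases hD.exists_subset_erase_or_exchange hAF hY hu huY with ⟨C, hC, hCA⟩ | ⟨v, hvY, hvA, hA'⟩
  · have := (rmin_le_card hC).trans (card_le_card hCA)
    rw [card_erase_of_mem hu] at this
    have := card_pos.2 ⟨u, hu⟩
    omega
  · exact ⟨v, hvY, hvA, mem_Fmin.2 ⟨hA', by rw [card_insert_erase hu hvA, hAc]⟩⟩

theorem exists_mem_Fmin_subset (hD : IsDeltaMatroid F) (hX : X ∈ F) : ∃ A ∈ Fmin F, A ⊆ X := by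
  obtain ⟨A, hA⟩ := Fmin_nonempty hD.1
  induction hn : (A \ X).card using Nat.strong_induction_on generalizing A with
  | _ n ih =>
    by_cases hAX : A ⊆ X
    · exact ⟨A, hA, hAX⟩
    obtain ⟨u, hu, huX⟩ := not_subset.1 hAX
    obtain ⟨v, hvX, -, hA'⟩ := hD.exists_exchange_of_mem_Fmin hA hX hu huX
    refine ih _ ?_ _ hA' rfl
    rw [insert_sdiff_of_mem _ hvX, erase_sdiff_comm, ← hn]
    exact card_erase_lt_of_mem (mem_sdiff.2 ⟨hu, huX⟩)

section PrimalTypeT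

variable (hD : IsDeltaMatroid F) (ht1 : ∀ A ∈ Fmin F, e ∉ A)
include hD ht1

theorem exists_insert_exchange (hAc : A.card = rmin F) (heA : e ∉ A) (hAe : insert e A ∈ F)
    (hY : Y ∈ F) (hu : u ∈ A) (huY : u ∉ Y) :
    ∃ v ∈ Y, v ∉ A ∧ insert e (insert v (A.erase u)) ∈ F := by
  have hue : u ≠ e := by rintro rfl; exact heA hu
  rcases hD.exists_subset_erase_or_exchange hAe hY (mem_insert_of_mem hu) huY with
    ⟨C, hC, hCsub⟩ | ⟨v, hvY, hv, hins⟩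
  · have hcard : ((insert e A).erase u).card = rmin F := by
      rw [card_erase_of_mem (mem_insert_of_mem hu), card_insert_of_notMem heA, hAc]; rfl
    have hCeq := eq_of_subset_of_card_le hCsub (hcard.trans_le (rmin_le_card hC))
    refine absurd ?_ (ht1 C (mem_Fmin.2 ⟨hC, hcard ▸ congrArg card hCeq⟩))
    rw [hCeq]
    exact mem_erase.2 ⟨hue.symm, mem_insert_self e A⟩
  · refine ⟨v, hvY, fun h => hv (mem_insert_of_mem h), ?_⟩
    rwa [erase_insert_of_ne hue.symm, insert_comm] at hins

theorem insert_mem_of_mem_Fmin_of_insert_mem (hBc : B.card = rmin F) (heB : e ∉ B)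
    (hBe : insert e B ∈ F) (hA : A ∈ Fmin F) : insert e A ∈ F := by
  induction hn : (B \ A).card using Nat.strong_induction_on generalizing B with
  | _ n ih =>
    by_cases hBA : B ⊆ A
    · rwa [← eq_of_subset_of_card_le hBA (by rw [hBc, (mem_Fmin.1 hA).2])]
    obtain ⟨u, hu, huA⟩ := not_subset.1 hBA
    obtain ⟨v, hvA, hvB, hB'⟩ :=
      exists_insert_exchange hD ht1 hBc heB hBe (mem_Fmin.1 hA).1 hu huA
    have hve : v ≠ e := by rintro rfl; exact ht1 A hA hvA
    refine ih _ ?_ (by rw [card_insert_erase hu hvB, hBc])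
      (by simp only [mem_insert, mem_erase, hve.symm, heB]; tauto) hB' rfl
    rw [insert_sdiff_of_mem _ hvA, erase_sdiff_comm, ← hn]
    exact card_erase_lt_of_mem (mem_sdiff.2 ⟨hu, huA⟩)

variable (ht2 : ∃ B ∈ F, B.card = rmin F + 1 ∧ e ∈ B)
include ht2

theorem insert_mem_of_mem_Fmin (hA : A ∈ Fmin F) : insert e A ∈ F := by
  obtain ⟨B, hB, hBc, heB⟩ := ht2
  obtain ⟨A₀, hA₀, hA₀B⟩ := hD.exists_mem_Fmin_subset hB
  have hA₀c := (mem_Fmin.1 hA₀).2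
  have heA₀ := ht1 A₀ hA₀
  have hB_eq : insert e A₀ = B := eq_of_subset_of_card_le (insert_subset heB hA₀B)
    (by rw [card_insert_of_notMem heA₀]; omega)
  exact insert_mem_of_mem_Fmin_of_insert_mem hD ht1 hA₀c heA₀ (hB_eq ▸ hB) hA

theorem mem_iff_erase_mem (heB : e ∈ B) (hBc : B.card ≤ rmin F + 1) :
    B ∈ F ↔ B.erase e ∈ F := by
  have hBe := card_erase_add_one heB
  constructor
  · intro hB
    obtain ⟨A, hA, hAB⟩ := hD.exists_mem_Fmin_subset hB
    have hAB' : A ⊆ B.erase e := subset_erase.2 ⟨hAB, ht1 A hA⟩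
    have hcard := card_le_card hAB'
    rw [← eq_of_subset_of_card_le hAB' (by rw [(mem_Fmin.1 hA).2]; omega)]
    exact (mem_Fmin.1 hA).1
  · intro hB
    have hmin : B.erase e ∈ Fmin F := mem_Fmin.2 ⟨hB, by have := rmin_le_card hB; omega⟩
    simpa only [insert_erase heB] using insert_mem_of_mem_Fmin hD ht1 ht2 hmin

end PrimalTypeT

end IsDeltaMatroid

end SS

theorem stmt13 (F : Finset (Finset α)) (hD : SS.IsDeltaMatroid F) (e : α)
    (ht1 : ∀ A ∈ SS.Fmin F, e ∉ A)
    (ht2 : ∃ B ∈ F, B.card = SS.rmin F + 1 ∧ e ∈ B) :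
    SS.rmin (SS.lc e F) = SS.rmin F ∧
    ∀ B ∈ SS.lc e F, B.card ≤ SS.rmin F + 1 → e ∉ B := by
  refine ⟨rmin_lc hD.1, fun B hB hBc heB => ?_⟩
  rw [mem_lc_iff, xor_iff_not_iff, hD.mem_iff_erase_mem ht1 ht2 heB hBc] at hB
  exact hB ⟨fun h => ⟨heB, h⟩, And.right⟩
end

section
/- Let D = (E, F) be a vf-safe delta-matroid (every sequence of twists and loop complementations applied to D yields a delta-matroid). Then the partial-× polynomial of D is a monomial c·z^m if and only if F = {E}. In that case the polynomial equals 2^{|E|} (so m = 0). -/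
open Finset Polynomial

variable {α : Type*} [DecidableEq α]

open SS

/-! ### Auxiliary lemmas -/

section Aux

theorem SS.mem_lc_s18 {e : α} {F : Finset (Finset α)} {Y : Finset α} :
    Y ∈ SS.lc e F ↔ (if e ∈ Y then ¬(Y ∈ F ↔ Y.erase e ∈ F) else Y ∈ F) := by
  unfold SS.lc
  simp only [Finset.mem_symmDiff, Finset.mem_image, Finset.mem_filter]
  constructor
  · rintro (⟨hY, h2⟩ | ⟨⟨X, ⟨hX, heX⟩, rfl⟩, h2⟩)
    · split
      · rename_i he
        intro hiff
        exact h2 ⟨Y.erase e, ⟨hiff.mp hY, Finset.notMem_erase _ _⟩, Finset.insert_erase he⟩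
      · exact hY
    · have he : e ∈ insert e X := Finset.mem_insert_self e X
      rw [if_pos he]
      rw [Finset.erase_insert heX]
      tauto
  · intro h
    by_cases he : e ∈ Y
    · rw [if_pos he] at h
      by_cases hY : Y ∈ F
      · left
        refine ⟨hY, ?_⟩
        rintro ⟨X, ⟨hX, heX⟩, rfl⟩
        rw [Finset.erase_insert heX] at h
        tauto
      · right
        have hYe : Y.erase e ∈ F := by tauto
        exact ⟨⟨Y.erase e, ⟨hYe, Finset.notMem_erase _ _⟩, Finset.insert_erase he⟩, hY⟩
    · rw [if_neg he] at h
      left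
      refine ⟨h, ?_⟩
      rintro ⟨X, ⟨hX, heX⟩, rfl⟩
      exact he (Finset.mem_insert_self e X)

/-- The parity of the number of feasible sets in the interval `[B, Y]`. -/
noncomputable def SS.par (F : Finset (Finset α)) (B Y : Finset α) : ZMod 2 :=
  ((F.filter (fun Z => B ⊆ Z ∧ Z ⊆ Y)).card : ZMod 2)

theorem SS.par_eq_sum (F : Finset (Finset α)) (B Y : Finset α) :
    SS.par F B Y = ∑ Z ∈ Y.powerset.filter (fun Z => B ⊆ Z),
      (if Z ∈ F then (1 : ZMod 2) else 0) := by
  rw [Finset.sum_ite_mem, Finset.sum_const, nsmul_eq_mul, mul_one]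
  unfold SS.par
  congr 2
  ext Z
  simp only [Finset.mem_filter, Finset.mem_inter, Finset.mem_powerset]
  tauto

theorem SS.par_split (F : Finset (Finset α)) {B Y : Finset α} {e : α} (he : e ∈ B) :
    SS.par F (B.erase e) Y = SS.par F B Y + SS.par F (B.erase e) (Y.erase e) := by
  unfold SS.par
  have hsplit : F.filter (fun Z => B.erase e ⊆ Z ∧ Z ⊆ Y) =
      F.filter (fun Z => B ⊆ Z ∧ Z ⊆ Y) ∪
      F.filter (fun Z => B.erase e ⊆ Z ∧ Z ⊆ Y.erase e) := by
    ext Z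
    simp only [Finset.mem_filter, Finset.mem_union]
    constructor
    · rintro ⟨hZ, hB, hY⟩
      by_cases heZ : e ∈ Z
      · left
        refine ⟨hZ, ?_, hY⟩
        intro a ha
        rcases eq_or_ne a e with rfl | hne
        · exact heZ
        · exact hB (Finset.mem_erase.2 ⟨hne, ha⟩)
      · right
        exact ⟨hZ, hB, fun a ha => Finset.mem_erase.2 ⟨fun h => heZ (h ▸ ha), hY ha⟩⟩
    · rintro (⟨hZ, hB, hY⟩ | ⟨hZ, hB, hY⟩)
      · exact ⟨hZ, (Finset.erase_subset e B).trans hB, hY⟩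
      · exact ⟨hZ, hB, hY.trans (Finset.erase_subset e Y)⟩
  have hdisj : Disjoint (F.filter (fun Z => B ⊆ Z ∧ Z ⊆ Y))
      (F.filter (fun Z => B.erase e ⊆ Z ∧ Z ⊆ Y.erase e)) := by
    rw [Finset.disjoint_left]
    intro Z h1 h2
    simp only [Finset.mem_filter] at h1 h2
    exact (Finset.mem_erase.1 (h2.2.2 (h1.2.1 he))).1 rfl
  rw [hsplit, Finset.card_union_of_disjoint hdisj]
  push_cast
  ring

theorem SS.par_lc_mem (F : Finset (Finset α)) {B Y : Finset α} {e : α} (he : e ∈ B)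
    (hBY : B ⊆ Y) : SS.par (SS.lc e F) B Y = SS.par F (B.erase e) Y := by
  have heY : e ∈ Y := hBY he
  have step : SS.par (SS.lc e F) B Y = SS.par F B Y + SS.par F (B.erase e) (Y.erase e) := by
    rw [SS.par_eq_sum, SS.par_eq_sum F B Y]
    have hre : ∑ Z ∈ Y.powerset.filter (fun Z => B ⊆ Z),
        (if Z.erase e ∈ F then (1 : ZMod 2) else 0) = SS.par F (B.erase e) (Y.erase e) := by
      rw [SS.par_eq_sum]
      apply Finset.sum_nbij' (fun Z => Z.erase e) (fun W => insert e W)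
      · intro Z hZ
        simp only [Finset.mem_filter, Finset.mem_powerset] at hZ ⊢
        exact ⟨Finset.erase_subset_erase e hZ.1, Finset.erase_subset_erase e hZ.2⟩
      · intro W hW
        simp only [Finset.mem_filter, Finset.mem_powerset] at hW ⊢
        constructor
        · exact Finset.insert_subset heY (hW.1.trans (Finset.erase_subset e Y))
        · intro a ha
          rcases eq_or_ne a e with rfl | hne
          · exact Finset.mem_insert_self a W
          · exact Finset.mem_insert_of_mem (hW.2 (Finset.mem_erase.2 ⟨hne, ha⟩))
      · intro Z hZ
        simp only [Finset.mem_filter, Finset.mem_powerset] at hZ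
        exact Finset.insert_erase (hZ.2 he)
      · intro W hW
        simp only [Finset.mem_filter, Finset.mem_powerset] at hW
        exact Finset.erase_insert (fun h => (Finset.mem_erase.1 (hW.1 h)).1 rfl)
      · intros; rfl
    rw [← hre, ← Finset.sum_add_distrib]
    apply Finset.sum_congr rfl
    intro Z hZ
    simp only [Finset.mem_filter, Finset.mem_powerset] at hZ
    have heZ : e ∈ Z := hZ.2 he
    have hm : Z ∈ SS.lc e F ↔ ¬(Z ∈ F ↔ Z.erase e ∈ F) := by
      rw [SS.mem_lc_s18, if_pos heZ]
    by_cases h1 : Z ∈ F <;> by_cases h2 : Z.erase e ∈ F <;>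
      simp [hm, h1, h2] <;> decide
  rw [step, SS.par_split F (Y := Y) he]

theorem SS.par_lc_notmem (F : Finset (Finset α)) {B Y : Finset α} {e : α} (he : e ∉ Y) :
    SS.par (SS.lc e F) B Y = SS.par F B Y := by
  unfold SS.par
  have hfe : (SS.lc e F).filter (fun Z => B ⊆ Z ∧ Z ⊆ Y) =
      F.filter (fun Z => B ⊆ Z ∧ Z ⊆ Y) := by
    ext Z
    simp only [Finset.mem_filter]
    constructor
    · rintro ⟨hZ, h⟩
      rw [SS.mem_lc_s18, if_neg (fun hc => he (h.2 hc))] at hZ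
      exact ⟨hZ, h⟩
    · rintro ⟨hZ, h⟩
      rw [SS.mem_lc_s18, if_neg (fun hc => he (h.2 hc))]
      exact ⟨hZ, h⟩
  rw [hfe]

theorem SS.par_self (F : Finset (Finset α)) (Y : Finset α) :
    SS.par F Y Y = if Y ∈ F then 1 else 0 := by
  unfold SS.par
  have : F.filter (fun Z => Y ⊆ Z ∧ Z ⊆ Y) = F.filter (fun Z => Z = Y) := by
    ext Z
    simp only [Finset.mem_filter]
    constructor
    · rintro ⟨h, h1, h2⟩; exact ⟨h, Finset.Subset.antisymm h2 h1⟩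
    · rintro ⟨h, rfl⟩; exact ⟨h, le_refl _, le_refl _⟩
  rw [this, Finset.filter_eq' F Y]
  split <;> simp_all

theorem SS.mem_foldl_lc (L : List α) (hnd : L.Nodup) (F : Finset (Finset α)) (Y : Finset α) :
    Y ∈ L.foldl (fun G e => SS.lc e G) F ↔ SS.par F (Y \ L.toFinset) Y = 1 := by
  induction L generalizing F with
  | nil =>
    simp only [List.foldl_nil, List.toFinset_nil, Finset.sdiff_empty]
    rw [SS.par_self]
    split <;> simp_all
  | cons e L ih =>
    simp only [List.foldl_cons]
    rw [ih (List.nodup_cons.1 hnd).2 (SS.lc e F)]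
    have heL : e ∉ L.toFinset := by
      simp only [List.mem_toFinset]; exact (List.nodup_cons.1 hnd).1
    by_cases heY : e ∈ Y
    · have heB : e ∈ Y \ L.toFinset := Finset.mem_sdiff.2 ⟨heY, heL⟩
      rw [SS.par_lc_mem F heB (Finset.sdiff_subset)]
      have : (Y \ L.toFinset).erase e = Y \ (e :: L).toFinset := by
        ext a
        simp only [Finset.mem_erase, Finset.mem_sdiff, List.toFinset_cons,
          Finset.mem_insert, List.mem_toFinset]
        tauto
      rw [this]
    · rw [SS.par_lc_notmem F heY]
      have : Y \ L.toFinset = Y \ (e :: L).toFinset := by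
        ext a
        simp only [Finset.mem_sdiff, List.toFinset_cons, Finset.mem_insert, List.mem_toFinset]
        constructor
        · rintro ⟨h1, h2⟩; exact ⟨h1, fun h => by rcases h with rfl | h; exact heY h1; exact h2 h⟩
        · rintro ⟨h1, h2⟩; exact ⟨h1, fun h => h2 (Or.inr h)⟩
      rw [this]

theorem SS.rmin_le_card_s18 {F : Finset (Finset α)} {Y : Finset α} (hY : Y ∈ F) :
    SS.rmin F ≤ Y.card := Nat.sInf_le ⟨Y, by simpa using hY, rfl⟩

theorem SS.exists_rmin {F : Finset (Finset α)} (h : F.Nonempty) :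
    ∃ Y ∈ F, Y.card = SS.rmin F := by
  have hne : (Finset.card '' (F : Set (Finset α))).Nonempty := by
    obtain ⟨Y, hY⟩ := h
    exact ⟨Y.card, Y, by simpa using hY, rfl⟩
  obtain ⟨Y, hY, hc⟩ := Nat.sInf_mem hne
  exact ⟨Y, by simpa using hY, hc⟩

theorem SS.exists_rmax {F : Finset (Finset α)} (h : F.Nonempty) :
    ∃ Y ∈ F, Y.card = SS.rmax F := by
  obtain ⟨Y, hY, hc⟩ := Finset.exists_mem_eq_sup F h Finset.card
  exact ⟨Y, hY, hc.symm⟩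

theorem SS.card_le_rmax {F : Finset (Finset α)} {Y : Finset α} (hY : Y ∈ F) :
    Y.card ≤ SS.rmax F := Finset.le_sup hY

theorem SS.lc_mem_cases {e : α} {F : Finset (Finset α)} {Z : Finset α} (h : Z ∈ SS.lc e F) :
    Z ∈ F ∨ (e ∈ Z ∧ Z.erase e ∈ F) := by
  rw [SS.mem_lc_s18] at h
  by_cases he : e ∈ Z
  · rw [if_pos he] at h
    by_cases h1 : Z ∈ F
    · exact Or.inl h1
    · exact Or.inr ⟨he, by tauto⟩
  · rw [if_neg he] at h
    exact Or.inl h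

theorem SS.lc_facts {e : α} {F : Finset (Finset α)} (h : F.Nonempty) :
    (SS.lc e F).Nonempty ∧ SS.rmin (SS.lc e F) = SS.rmin F := by
  obtain ⟨Y, hY, hc⟩ := SS.exists_rmin h
  have hmem : Y ∈ SS.lc e F := by
    rw [SS.mem_lc_s18]
    split
    · rename_i he
      intro hiff
      have := SS.rmin_le_card_s18 (hiff.mp hY)
      rw [Finset.card_erase_of_mem he, hc] at this
      have hpos : 0 < Y.card := Finset.card_pos.2 ⟨e, he⟩
      omega
    · exact hY
  refine ⟨⟨Y, hmem⟩, le_antisymm ?_ ?_⟩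
  · rw [← hc]; exact SS.rmin_le_card_s18 hmem
  · apply le_csInf
    · exact ⟨Y.card, Y, by simpa using hmem, rfl⟩
    · rintro m ⟨Z, hZ, rfl⟩
      simp only [Finset.mem_coe] at hZ
      rcases SS.lc_mem_cases hZ with h1 | ⟨he, h1⟩
      · exact SS.rmin_le_card_s18 h1
      · exact (SS.rmin_le_card_s18 h1).trans (Finset.card_le_card (Finset.erase_subset e Z))

theorem SS.lc_subset {e : α} {E : Finset α} {F : Finset (Finset α)} (he : e ∈ E)
    (h : ∀ Z ∈ F, Z ⊆ E) : ∀ Z ∈ SS.lc e F, Z ⊆ E := by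
  intro Z hZ
  rcases SS.lc_mem_cases hZ with h1 | ⟨heZ, h1⟩
  · exact h Z h1
  · intro a ha
    rcases eq_or_ne a e with rfl | hne
    · exact he
    · exact h _ h1 (Finset.mem_erase.2 ⟨hne, ha⟩)

theorem SS.foldl_lc_facts (L : List α) {E : Finset α} {F : Finset (Finset α)}
    (hL : ∀ e ∈ L, e ∈ E) (hne : F.Nonempty) (hsub : ∀ Z ∈ F, Z ⊆ E) :
    (L.foldl (fun G e => SS.lc e G) F).Nonempty ∧
    SS.rmin (L.foldl (fun G e => SS.lc e G) F) = SS.rmin F ∧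
    (∀ Z ∈ L.foldl (fun G e => SS.lc e G) F, Z ⊆ E) := by
  induction L generalizing F with
  | nil => exact ⟨hne, rfl, hsub⟩
  | cons e L ih =>
    simp only [List.foldl_cons]
    obtain ⟨h1, h2⟩ := SS.lc_facts (e := e) hne
    obtain ⟨g1, g2, g3⟩ := ih (fun a ha => hL a (List.mem_cons_of_mem e ha)) h1
      (SS.lc_subset (hL e (List.mem_cons_self)) hsub)
    exact ⟨g1, g2.trans h2, g3⟩

theorem SS.wordOn_cross (A : Finset α) (F : Finset (Finset α)) :
    SS.wordOn [SS.Op.cross] A F = A.toList.foldl (fun G e => SS.lc e G) F := rfl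

theorem SS.lc_singleton {e : α} {E : Finset α} (he : e ∈ E) :
    SS.lc e ({E} : Finset (Finset α)) = {E} := by
  ext Y
  rw [SS.mem_lc_s18]
  by_cases heY : e ∈ Y
  · rw [if_pos heY]
    have hne : Y.erase e ≠ E := fun h => (Finset.notMem_erase e Y) (h ▸ he)
    simp only [Finset.mem_singleton]
    tauto
  · rw [if_neg heY]

end Aux

theorem SS.foldl_lc_singleton (L : List α) {E : Finset α} (hL : ∀ e ∈ L, e ∈ E) :
    L.foldl (fun G e => SS.lc e G) ({E} : Finset (Finset α)) = {E} := by
  induction L with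
  | nil => rfl
  | cons e L ih =>
    simp only [List.foldl_cons, SS.lc_singleton (hL e (List.mem_cons_self))]
    exact ih (fun a ha => hL a (List.mem_cons_of_mem e ha))

theorem SS.width_singleton (E : Finset α) : SS.width ({E} : Finset (Finset α)) = 0 := by
  simp [SS.width, SS.rmax, SS.rmin]

theorem SS.poly_singleton (E : Finset α) :
    SS.poly [SS.Op.cross] E ({E} : Finset (Finset α)) = Polynomial.C ((2 : ℤ) ^ E.card) := by
  unfold SS.poly
  rw [Finset.sum_congr rfl (fun A hA => by
    rw [SS.wordOn_cross, SS.foldl_lc_singleton A.toList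
      (fun e he => Finset.mem_powerset.1 hA (Finset.mem_toList.1 he)),
      SS.width_singleton, pow_zero])]
  rw [Finset.sum_const, Finset.card_powerset, nsmul_eq_mul, mul_one]
  push_cast
  rw [map_pow]
  norm_num

theorem stmt18 (E : Finset α) (F : Finset (Finset α)) (hF : ∀ X ∈ F, X ⊆ E)
    (hvf : SS.VfSafe F) :
    ((∃ c : ℤ, c ≠ 0 ∧ ∃ m : ℕ,
        SS.poly [SS.Op.cross] E F = Polynomial.C c * Polynomial.X ^ m) ↔ F = {E}) ∧
    (F = {E} → SS.poly [SS.Op.cross] E F = Polynomial.C ((2 : ℤ) ^ E.card)) := by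
  classical
  have hFne : F.Nonempty := (hvf []).1
  have hforward : F = {E} → SS.poly [SS.Op.cross] E F = Polynomial.C ((2 : ℤ) ^ E.card) := by
    intro hE; rw [hE]; exact SS.poly_singleton E
  have hmem_iff : ∀ (A : Finset α) (Y : Finset α),
      Y ∈ SS.wordOn [SS.Op.cross] A F ↔ SS.par F (Y \ A) Y = 1 := by
    intro A Y
    rw [SS.wordOn_cross]
    have := SS.mem_foldl_lc A.toList (Finset.nodup_toList A) F Y
    rwa [Finset.toList_toFinset] at this
  have hzmod : ∀ x : ZMod 2, x ≠ 1 → x = 0 := by decide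
  have main : (∃ c : ℤ, c ≠ 0 ∧ ∃ m : ℕ,
      SS.poly [SS.Op.cross] E F = Polynomial.C c * Polynomial.X ^ m) → F = {E} := by
    rintro ⟨c, hc0, m, hpoly⟩
    -- Step 1: all widths are equal to m
    have hwidthA : ∀ A ∈ E.powerset, SS.width (SS.wordOn [SS.Op.cross] A F) = m := by
      intro A hA
      by_contra hne
      set kk := SS.width (SS.wordOn [SS.Op.cross] A F) with hkk
      have hcoeff := congrArg (fun p => Polynomial.coeff p kk) hpoly
      simp only [SS.poly, Polynomial.finset_sum_coeff, Polynomial.coeff_X_pow,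
        Polynomial.coeff_C_mul] at hcoeff
      rw [Finset.sum_boole] at hcoeff
      rw [if_neg hne, mul_zero] at hcoeff
      have hmemA : A ∈ E.powerset.filter
          (fun A' => kk = SS.width (SS.wordOn [SS.Op.cross] A' F)) :=
        Finset.mem_filter.2 ⟨hA, rfl⟩
      have : (E.powerset.filter
          (fun A' => kk = SS.width (SS.wordOn [SS.Op.cross] A' F))).card = 0 := by
        exact_mod_cast hcoeff
      rw [Finset.card_eq_zero] at this
      rw [this] at hmemA
      exact absurd hmemA (Finset.notMem_empty A)
    obtain ⟨Ymin, hYmin, hYminc⟩ := SS.exists_rmin hFne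
    have hkr : SS.rmin F ≤ SS.rmax F := by rw [← hYminc]; exact SS.card_le_rmax hYmin
    have hrn : SS.rmax F ≤ E.card := by
      obtain ⟨Ymax, hYmax, hYmaxc⟩ := SS.exists_rmax hFne
      rw [← hYmaxc]; exact Finset.card_le_card (hF _ hYmax)
    have hm : m = SS.rmax F - SS.rmin F := by
      have h0 := hwidthA ∅ (Finset.empty_mem_powerset E)
      rw [SS.wordOn_cross] at h0
      simp only [Finset.toList_empty, List.foldl_nil] at h0
      rw [← h0]; rfl
    -- Step 2: rmax is preserved
    have hG : ∀ A ∈ E.powerset, SS.rmax (SS.wordOn [SS.Op.cross] A F) = SS.rmax F ∧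
        (SS.wordOn [SS.Op.cross] A F).Nonempty ∧
        (∀ Z ∈ SS.wordOn [SS.Op.cross] A F, Z ⊆ E) := by
      intro A hA
      have hLmem : ∀ e ∈ A.toList, e ∈ E := fun e he =>
        Finset.mem_powerset.1 hA (Finset.mem_toList.1 he)
      obtain ⟨g1, g2, g3⟩ := SS.foldl_lc_facts A.toList hLmem hFne hF
      rw [← SS.wordOn_cross] at g1 g2 g3
      refine ⟨?_, g1, g3⟩
      have hw := hwidthA A hA
      obtain ⟨Z, hZ, hZc⟩ := SS.exists_rmin g1
      have h2 : SS.rmin F ≤ SS.rmax (SS.wordOn [SS.Op.cross] A F) := by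
        rw [← g2, ← hZc]; exact SS.card_le_rmax hZ
      have h3 : SS.rmax (SS.wordOn [SS.Op.cross] A F) -
          SS.rmin (SS.wordOn [SS.Op.cross] A F) = m := hw
      rw [g2] at h3
      omega
    -- Step 3: r = n
    have hr : SS.rmax F = E.card := by
      by_contra hrne
      have hrlt : SS.rmax F < E.card := lt_of_le_of_ne hrn hrne
      obtain ⟨Z0, hZ0⟩ := hFne
      have hZ0r : Z0.card ≤ SS.rmax F := SS.card_le_rmax hZ0
      obtain ⟨Y, hZ0Y, hYE, hYc⟩ := Finset.exists_subsuperset_card_eq (hF Z0 hZ0)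
        (by omega : Z0.card ≤ SS.rmax F + 1) (by omega : SS.rmax F + 1 ≤ E.card)
      have hpar0 : ∀ B ⊆ Y, SS.par F B Y = 0 := by
        intro B hBY
        set A := (Y \ B) ∪ (E \ Y) with hA
        have hAE : A ∈ E.powerset := Finset.mem_powerset.2
          (Finset.union_subset (Finset.sdiff_subset.trans hYE) Finset.sdiff_subset)
        obtain ⟨hrmax, hne', hsub'⟩ := hG A hAE
        have hYnot : Y ∉ SS.wordOn [SS.Op.cross] A F := by
          intro hmem
          have := SS.card_le_rmax hmem
          rw [hrmax] at this
          omega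
        have hnot1 : ¬ (SS.par F (Y \ A) Y = 1) := fun h => hYnot ((hmem_iff A Y).2 h)
        have hYA : Y \ A = B := by
          ext a
          simp only [hA, Finset.mem_sdiff, Finset.mem_union, not_or, not_and, not_not]
          constructor
          · rintro ⟨h1, h2, h3⟩
            exact h2 h1
          · intro hB
            exact ⟨hBY hB, fun _ => hB, fun _ => hBY hB⟩
        rw [hYA] at hnot1
        exact hzmod _ hnot1
      have hS : (F.filter (fun Z => Z ⊆ Y)).Nonempty :=
        ⟨Z0, Finset.mem_filter.2 ⟨hZ0, hZ0Y⟩⟩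
      obtain ⟨Zm, hZm, hZmax⟩ := Finset.exists_max_image
        (F.filter (fun Z => Z ⊆ Y)) Finset.card hS
      have hZmF := (Finset.mem_filter.1 hZm).1
      have hZmY := (Finset.mem_filter.1 hZm).2
      have hfilter : F.filter (fun Z => Zm ⊆ Z ∧ Z ⊆ Y) = {Zm} := by
        ext W
        simp only [Finset.mem_filter, Finset.mem_singleton]
        constructor
        · rintro ⟨hWF, hsub, hWY⟩
          have hle : W.card ≤ Zm.card := hZmax W (Finset.mem_filter.2 ⟨hWF, hWY⟩)
          exact (Finset.eq_of_subset_of_card_le hsub hle).symm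
        · rintro rfl; exact ⟨hZmF, le_refl _, hZmY⟩
      have hp := hpar0 Zm hZmY
      unfold SS.par at hp
      rw [hfilter, Finset.card_singleton] at hp
      exact absurd hp (by decide)
    -- Step 4: E ∈ F
    have hEF : E ∈ F := by
      obtain ⟨Zx, hZx, hZxc⟩ := SS.exists_rmax hFne
      have : Zx = E := Finset.eq_of_subset_of_card_le (hF _ hZx) (by rw [hZxc, hr])
      rwa [← this]
    -- Step 5: par F B E = 1 for all B ⊆ E
    have hpar1 : ∀ B ⊆ E, SS.par F B E = 1 := by
      intro B hB
      set A := E \ B with hA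
      have hAE : A ∈ E.powerset := Finset.mem_powerset.2 Finset.sdiff_subset
      obtain ⟨hrmax, hne', hsub'⟩ := hG A hAE
      obtain ⟨Zx, hZx, hZxc⟩ := SS.exists_rmax hne'
      have hZxE : Zx = E := Finset.eq_of_subset_of_card_le (hsub' _ hZx)
        (by rw [hZxc, hrmax, hr])
      have hEmem : E ∈ SS.wordOn [SS.Op.cross] A F := hZxE ▸ hZx
      have h1 := (hmem_iff A E).1 hEmem
      have hEA : E \ A = B := by
        rw [hA, Finset.sdiff_sdiff_self_left]
        exact Finset.inter_eq_right.2 hB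
      rwa [hEA] at h1
    -- Step 6: F = {E}
    rw [Finset.eq_singleton_iff_unique_mem]
    refine ⟨hEF, ?_⟩
    intro Z hZF
    by_contra hZE
    have hS : (F.erase E).Nonempty := ⟨Z, Finset.mem_erase.2 ⟨hZE, hZF⟩⟩
    obtain ⟨Zm, hZm, hZmax⟩ := Finset.exists_max_image (F.erase E) Finset.card hS
    have hZmE : Zm ≠ E := (Finset.mem_erase.1 hZm).1
    have hZmF : Zm ∈ F := (Finset.mem_erase.1 hZm).2
    have hfilter : F.filter (fun W => Zm ⊆ W ∧ W ⊆ E) = {Zm, E} := by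
      ext W
      simp only [Finset.mem_filter, Finset.mem_insert, Finset.mem_singleton]
      constructor
      · rintro ⟨hWF, hsub, hWE⟩
        by_cases hW : W = E
        · right; exact hW
        · left
          have hle := hZmax W (Finset.mem_erase.2 ⟨hW, hWF⟩)
          exact (Finset.eq_of_subset_of_card_le hsub hle).symm
      · rintro (rfl | rfl)
        · exact ⟨hZmF, le_refl _, hF _ hZmF⟩
        · exact ⟨hEF, hF _ hZmF, le_refl _⟩
    have hp := hpar1 Zm (hF _ hZmF)
    unfold SS.par at hp
    rw [hfilter, Finset.card_insert_of_notMem (by simp [hZmE]),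
      Finset.card_singleton] at hp
    exact absurd hp (by decide)
  refine ⟨⟨main, fun hE => ?_⟩, hforward⟩
  exact ⟨(2 : ℤ) ^ E.card, by positivity, 0, by rw [hforward hE]; simp⟩
end
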